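/- The kernel k(p,q) = ∑_{n=0}^∞ pⁿ conj(q)ⁿ is positive definite on the open unit ball 𝔹 of the quaternions: for every N, every p₁,…,p_N ∈ 𝔹 and c₁,…,c_N ∈ ℍ, the real number ∑_{ℓ,j} conj(c_ℓ) · k(p_ℓ, p_j) · c_j is nonnegative (and is indeed real). -/

import Mathlib

open scoped Quaternion

/-!
Writing `k(p, q) = ∑ₙ pⁿ conj(q)ⁿ` as a sum of rank-one kernels `aₙ(p) conj(aₙ(q))` with `aₙ(p) = pⁿ`,
the quadratic form `∑_{l,j} conj(c_l) k(p_l, p_j) c_j` becomes `∑ₙ conj(vₙ) vₙ = ∑ₙ |vₙ|²`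
with `vₙ = ∑_j conj(p_j)ⁿ c_j`, a convergent series of nonnegative reals.
-/

theorem summable_pow_mul_pow_of_norm_mul_lt_one {R : Type*} [NormedRing R] [NormOneClass R]
    [CompleteSpace R] {a b : R} (h : ‖a‖ * ‖b‖ < 1) :
    Summable fun n : ℕ => a ^ n * b ^ n := by
  refine Summable.of_norm_bounded (summable_geometric_of_lt_one (by positivity) h) fun n => ?_
  calc ‖a ^ n * b ^ n‖ ≤ ‖a ^ n‖ * ‖b ^ n‖ := norm_mul_le _ _
    _ ≤ ‖a‖ ^ n * ‖b‖ ^ n := by gcongr <;> exact norm_pow_le _ _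
    _ = (‖a‖ * ‖b‖) ^ n := (mul_pow _ _ _).symm

theorem hasSum_star_mul_self_of_summable_mul_star {R β ι : Type*} [NonUnitalSemiring R]
    [StarRing R] [TopologicalSpace R] [IsTopologicalSemiring R] [Fintype ι]
    (a : ι → β → R) (c : ι → R) (h : ∀ l j, Summable fun n => a l n * star (a j n)) :
    HasSum (fun n => star (∑ j, star (a j n) * c j) * ∑ j, star (a j n) * c j)
      (∑ l, ∑ j, star (c l) * (∑' n, a l n * star (a j n)) * c j) := by
  have hexpand : ∀ n, star (∑ j, star (a j n) * c j) * ∑ j, star (a j n) * c j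
      = ∑ l, ∑ j, star (c l) * (a l n * star (a j n)) * c j := by
    intro n
    simp only [star_sum, star_mul, star_star, Finset.sum_mul_sum, mul_assoc]
  simp only [hexpand]
  exact hasSum_sum fun l _ => hasSum_sum fun j _ =>
    ((h l j).hasSum.mul_left (star (c l))).mul_right (c j)

theorem szego_kernel_posdef (N : ℕ) (p : Fin N → ℍ[ℝ]) (c : Fin N → ℍ[ℝ])
    (hp : ∀ i, ‖p i‖ < 1) :
    (((∑ l, ∑ j, star (c l) * (∑' n : ℕ, (p l) ^ n * (star (p j)) ^ n) * c j).re : ℝ) :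
        ℍ[ℝ]) = ∑ l, ∑ j, star (c l) * (∑' n : ℕ, (p l) ^ n * (star (p j)) ^ n) * c j ∧
      0 ≤ (∑ l, ∑ j, star (c l) * (∑' n : ℕ, (p l) ^ n * (star (p j)) ^ n) * c j).re := by
  have hsummable : ∀ l j, Summable fun n : ℕ => p l ^ n * star (p j ^ n) := fun l j => by
    simp only [star_pow]
    refine summable_pow_mul_pow_of_norm_mul_lt_one ?_
    rw [norm_star]
    exact mul_lt_one_of_nonneg_of_lt_one_left (norm_nonneg _) (hp l) (hp j).le
  have hform := hasSum_star_mul_self_of_summable_mul_star (fun l n => p l ^ n) c hsummable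
  simp only [Quaternion.star_mul_self, star_pow] at hform
  rw [hform.tsum_eq.symm, Quaternion.tsum_coe, Quaternion.re_coe]
  exact ⟨rfl, tsum_nonneg fun n => Quaternion.normSq_nonneg⟩
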